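/- Every sλ-paracompact, sλ-Hausdorff generalized topological space in which finite intersections of sλ-open sets are sλ-open is sλ-normal. -/

import Mathlib

open Set

variable {Y : Type*}

/-- A generalized topology: contains ∅ and is closed under arbitrary unions. -/
def IsGT (γ : Set (Set Y)) : Prop := ∅ ∈ γ ∧ ∀ S ⊆ γ, ⋃₀ S ∈ γ

/-- γ-closure: intersection of all γ-closed supersets. -/
def gCl (γ : Set (Set Y)) (D : Set Y) : Set Y := ⋂₀ {C | Cᶜ ∈ γ ∧ D ⊆ C}

/-- sγ-open set. -/
def SOpen (γ : Set (Set Y)) (D : Set Y) : Prop := ∃ V ∈ γ, V ⊆ D ∧ D ⊆ gCl γ V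

/-- sγ-closed set. -/
def SClosed (γ : Set (Set Y)) (D : Set Y) : Prop := SOpen γ Dᶜ

/-- semi-kernel: intersection of all sγ-open supersets. -/
def sKer (γ : Set (Set Y)) (D : Set Y) : Set Y := ⋂₀ {G | SOpen γ G ∧ D ⊆ G}

/-- sγ-closure: intersection of all sγ-closed supersets. -/
def sCl (γ : Set (Set Y)) (D : Set Y) : Set Y := ⋂₀ {C | SClosed γ C ∧ D ⊆ C}

/-- sλ-closed set. -/
def SLClosed (γ : Set (Set Y)) (D : Set Y) : Prop :=
  ∃ M N : Set Y, M = sKer γ M ∧ SClosed γ N ∧ D = M ∩ N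

/-- sλ-open set. -/
def SLOpen (γ : Set (Set Y)) (D : Set Y) : Prop := SLClosed γ Dᶜ

/-- sλ-closure: intersection of all sλ-closed supersets. -/
def slCl (γ : Set (Set Y)) (D : Set Y) : Set Y := ⋂₀ {C | SLClosed γ C ∧ D ⊆ C}

/-- sλ-interior: union of all sλ-open subsets. -/
def slInt (γ : Set (Set Y)) (D : Set Y) : Set Y := ⋃₀ {U | SLOpen γ U ∧ U ⊆ D}

/-- sg_λ-closed set. -/
def SgClosed (γ : Set (Set Y)) (D : Set Y) : Prop :=
  ∀ V : Set Y, SLOpen γ V → D ⊆ V → slCl γ D ⊆ V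

/-- sg_λ-open set. -/
def SgOpen (γ : Set (Set Y)) (D : Set Y) : Prop := SgClosed γ Dᶜ

/-- sλR₀: every sλ-open set contains the sλ-closure of each of its singletons. -/
def SLR0 (γ : Set (Set Y)) : Prop :=
  ∀ G : Set Y, SLOpen γ G → ∀ y ∈ G, slCl γ {y} ⊆ G

/-- sλR₁. -/
def SLR1 (γ : Set (Set Y)) : Prop :=
  ∀ p q : Y, p ∉ slCl γ {q} →
    ∃ E F : Set Y, SLOpen γ E ∧ SLOpen γ F ∧ p ∈ E ∧ q ∈ F ∧ E ∩ F = ∅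

/-- sλT₁. -/
def SLT1 (γ : Set (Set Y)) : Prop :=
  ∀ p q : Y, p ≠ q →
    ∃ E F : Set Y, SLOpen γ E ∧ SLOpen γ F ∧ p ∈ E ∧ q ∉ E ∧ q ∈ F ∧ p ∉ F

/-- sλT₂ (sλ-Hausdorff). -/
def SLT2 (γ : Set (Set Y)) : Prop :=
  ∀ p q : Y, p ≠ q →
    ∃ E F : Set Y, SLOpen γ E ∧ SLOpen γ F ∧ p ∈ E ∧ q ∈ F ∧ E ∩ F = ∅

/-- sλ-regular. -/
def SLRegular (γ : Set (Set Y)) : Prop :=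
  ∀ A : Set Y, SLClosed γ A → ∀ p : Y, p ∉ A →
    ∃ E F : Set Y, SLOpen γ E ∧ SLOpen γ F ∧ A ⊆ E ∧ p ∈ F ∧
      slCl γ E ∩ slCl γ F = ∅

/-- sλ-normal. -/
def SLNormal (γ : Set (Set Y)) : Prop :=
  ∀ A B : Set Y, SLClosed γ A → SLClosed γ B → A ∩ B = ∅ →
    ∃ E F : Set Y, SLOpen γ E ∧ SLOpen γ F ∧ A ⊆ E ∧ B ⊆ F ∧
      slCl γ E ∩ slCl γ F = ∅

/-- sλ-compact. -/
def SLCompact (γ : Set (Set Y)) : Prop :=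
  ∀ 𝒞 : Set (Set Y), (∀ U ∈ 𝒞, SLOpen γ U) → ⋃₀ 𝒞 = univ →
    ∃ 𝒟 : Finset (Set Y), ↑𝒟 ⊆ 𝒞 ∧ ⋃₀ (𝒟 : Set (Set Y)) = univ

/-- sλ-weakly separated. -/
def SLWeaklySeparated (γ : Set (Set Y)) (G H : Set Y) : Prop :=
  (G ∩ slCl γ H) ∪ (H ∩ slCl γ G) = ∅

/-- sλ-completely normal. -/
def SLCompletelyNormal (γ : Set (Set Y)) : Prop :=
  ∀ G H : Set Y, SLWeaklySeparated γ G H →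
    ∃ U V : Set Y, SLOpen γ U ∧ SLOpen γ V ∧ G ⊆ U ∧ H ⊆ V ∧
      slCl γ U ∩ slCl γ V = ∅

/-- sλ-continuous real-valued function. -/
def SLContinuousReal (γ : Set (Set Y)) (f : Y → ℝ) : Prop :=
  ∀ s : Set ℝ, IsOpen s → SLOpen γ (f ⁻¹' s)

section Aux
variable {γ : Set (Set Y)}

lemma gCl_mono {D E : Set Y} (h : D ⊆ E) : gCl γ D ⊆ gCl γ E :=
  fun x hx C hC => hx C ⟨hC.1, h.trans hC.2⟩

lemma sOpen_sUnion (hγ : IsGT γ) {S : Set (Set Y)} (h : ∀ D ∈ S, SOpen γ D) :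
    SOpen γ (⋃₀ S) := by
  choose! W hWγ hWsub hWcl using h
  refine ⟨⋃ D ∈ S, W D, ?_, ?_, ?_⟩
  · have he : (⋃ D ∈ S, W D) = ⋃₀ (W '' S) := by rw [sUnion_image]
    rw [he]
    exact hγ.2 _ (by rintro _ ⟨D, hD, rfl⟩; exact hWγ D hD)
  · exact iUnion₂_subset fun D hD => (hWsub D hD).trans (subset_sUnion_of_mem hD)
  · rintro x ⟨D, hD, hx⟩
    exact gCl_mono (subset_iUnion₂ (s := fun D _ => W D) D hD) (hWcl D hD hx)

lemma sOpen_empty (hγ : IsGT γ) : SOpen γ (∅ : Set Y) :=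
  ⟨∅, hγ.1, Subset.rfl, empty_subset _⟩

lemma sOpen_univ (hγ : IsGT γ) : SOpen γ (univ : Set Y) := by
  refine ⟨⋃₀ γ, hγ.2 γ Subset.rfl, subset_univ _, ?_⟩
  intro x _ C hC
  by_contra hxC
  exact hxC (hC.2 (subset_sUnion_of_mem hC.1 hxC))

lemma subset_sKer {D : Set Y} : D ⊆ sKer γ D :=
  fun _ hx G hG => hG.2 hx

lemma sKer_mono {D E : Set Y} (h : D ⊆ E) : sKer γ D ⊆ sKer γ E :=
  fun x hx G hG => hx G ⟨hG.1, h.trans hG.2⟩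

lemma sKer_empty (hγ : IsGT γ) : sKer γ (∅ : Set Y) = ∅ :=
  subset_empty_iff.mp (sInter_subset_of_mem ⟨sOpen_empty hγ, Subset.rfl⟩)

lemma slClosed_empty (hγ : IsGT γ) : SLClosed γ (∅ : Set Y) :=
  ⟨∅, ∅, (sKer_empty hγ).symm,
    by unfold SClosed; rw [compl_empty]; exact sOpen_univ hγ, by simp⟩

lemma slOpen_univ (hγ : IsGT γ) : SLOpen γ (univ : Set Y) := by
  unfold SLOpen; rw [compl_univ]; exact slClosed_empty hγ

lemma slOpen_compl {D : Set Y} (h : SLClosed γ D) : SLOpen γ Dᶜ := by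
  unfold SLOpen; rwa [compl_compl]

lemma slOpen_sUnion (hγ : IsGT γ) {S : Set (Set Y)} (h : ∀ D ∈ S, SLOpen γ D) :
    SLOpen γ (⋃₀ S) := by
  choose! M N hM hN hMN using h
  refine ⟨⋂ D ∈ S, M D, ⋂ D ∈ S, N D, ?_, ?_, ?_⟩
  · refine Subset.antisymm subset_sKer ?_
    refine subset_iInter₂ fun D hD => ?_
    exact (sKer_mono (iInter₂_subset D hD)).trans (hM D hD).symm.subset
  · unfold SClosed
    have he : (⋂ D ∈ S, N D)ᶜ = ⋃₀ ((fun D => (N D)ᶜ) '' S) := by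
      rw [sUnion_image]; simp [compl_iInter]
    rw [he]
    exact sOpen_sUnion hγ (by rintro _ ⟨D, hD, rfl⟩; exact hN D hD)
  · ext x
    constructor
    · intro hx
      have hx' : ∀ D ∈ S, x ∈ M D ∩ N D := fun D hD => by
        rw [← hMN D hD]; exact fun hxD => hx ⟨D, hD, hxD⟩
      exact ⟨mem_iInter₂.mpr fun D hD => (hx' D hD).1,
             mem_iInter₂.mpr fun D hD => (hx' D hD).2⟩
    · rintro ⟨h1, h2⟩ ⟨D, hD, hxD⟩
      have : x ∈ M D ∩ N D := ⟨mem_iInter₂.mp h1 D hD, mem_iInter₂.mp h2 D hD⟩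
      rw [← hMN D hD] at this
      exact this hxD

lemma slClosed_sInter (hγ : IsGT γ) {S : Set (Set Y)} (h : ∀ C ∈ S, SLClosed γ C) :
    SLClosed γ (⋂₀ S) := by
  have h1 : SLOpen γ (⋃₀ (compl '' S)) :=
    slOpen_sUnion hγ (by rintro _ ⟨C, hC, rfl⟩; exact slOpen_compl (h C hC))
  have he : ⋂₀ S = (⋃₀ (compl '' S))ᶜ := by ext x; simp
  rw [he]
  exact h1

lemma slClosed_slCl (hγ : IsGT γ) {D : Set Y} : SLClosed γ (slCl γ D) :=
  slClosed_sInter hγ fun _ hC => hC.1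

lemma subset_slCl {D : Set Y} : D ⊆ slCl γ D :=
  fun _ hx C hC => hC.2 hx

lemma slCl_subset {C D : Set Y} (h1 : SLClosed γ C) (h2 : D ⊆ C) : slCl γ D ⊆ C :=
  sInter_subset_of_mem ⟨h1, h2⟩

lemma slOpen_biInter (hγ : IsGT γ)
    (hA : ∀ U V : Set Y, SLOpen γ U → SLOpen γ V → SLOpen γ (U ∩ V))
    {S : Set (Set Y)} (hS : S.Finite) {f : Set Y → Set Y}
    (h : ∀ V ∈ S, SLOpen γ (f V)) : SLOpen γ (⋂ V ∈ S, f V) := by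
  refine Set.Finite.induction_on_subset (motive := fun s _ => SLOpen γ (⋂ V ∈ s, f V)) S hS (by simpa using slOpen_univ hγ) ?_
  intro a s haS _ _ ih
  rw [biInter_insert]
  exact hA _ _ (h a haS) ih

end Aux

lemma aux_R (γ : Set (Set Y)) (hγ : IsGT γ)
    (hA : ∀ U V : Set Y, SLOpen γ U → SLOpen γ V → SLOpen γ (U ∩ V))
    (hT2 : SLT2 γ)
    (hpara : ∀ 𝒞 : Set (Set Y), (∀ U ∈ 𝒞, SLOpen γ U) → ⋃₀ 𝒞 = univ →
      ∃ 𝒟 : Set (Set Y), (∀ V ∈ 𝒟, SLOpen γ V) ∧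
        (∀ V ∈ 𝒟, ∃ U ∈ 𝒞, V ⊆ U) ∧ ⋃₀ 𝒟 = univ ∧
        (∀ y : Y, ∃ N : Set Y, SLOpen γ N ∧ y ∈ N ∧
          {V ∈ 𝒟 | (V ∩ N).Nonempty}.Finite))
    (A : Set Y) (hAcl : SLClosed γ A) (p : Y) (hp : p ∉ A) :
    ∃ F : Set Y, SLOpen γ F ∧ A ⊆ F ∧ p ∉ slCl γ F := by
  have hsep : ∀ a : Y, ∃ UV : Set Y × Set Y, a ∈ A →
      SLOpen γ UV.1 ∧ SLOpen γ UV.2 ∧ p ∈ UV.1 ∧ a ∈ UV.2 ∧ UV.1 ∩ UV.2 = ∅ := by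
    intro a
    by_cases ha : a ∈ A
    · obtain ⟨U, V, h1, h2, h3, h4, h5⟩ := hT2 p a (fun h => hp (h ▸ ha))
      exact ⟨(U, V), fun _ => ⟨h1, h2, h3, h4, h5⟩⟩
    · exact ⟨(∅, ∅), fun h => absurd h ha⟩
  choose UV hUV using hsep
  set U : Y → Set Y := fun a => (UV a).1 with hU
  set V : Y → Set Y := fun a => (UV a).2 with hV
  set 𝒞 : Set (Set Y) := insert Aᶜ {X | ∃ a ∈ A, X = V a} with h𝒞
  have hcov : ⋃₀ 𝒞 = univ := by
    ext y; simp only [mem_univ, iff_true, mem_sUnion]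
    by_cases hy : y ∈ A
    · exact ⟨V y, mem_insert_of_mem _ ⟨y, hy, rfl⟩, (hUV y hy).2.2.2.1⟩
    · exact ⟨Aᶜ, mem_insert _ _, hy⟩
  have hop : ∀ X ∈ 𝒞, SLOpen γ X := by
    intro X hX
    rcases mem_insert_iff.mp hX with rfl | ⟨a, ha, rfl⟩
    · exact slOpen_compl hAcl
    · exact (hUV a ha).2.1
  obtain ⟨𝒟, h𝒟op, h𝒟ref, h𝒟cov, h𝒟lf⟩ := hpara 𝒞 hop hcov
  refine ⟨⋃₀ {X ∈ 𝒟 | (X ∩ A).Nonempty},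
      slOpen_sUnion hγ (fun X hX => h𝒟op X hX.1), ?_, ?_⟩
  · intro a ha
    have h1 : a ∈ ⋃₀ 𝒟 := h𝒟cov ▸ mem_univ a
    obtain ⟨X, hX, haX⟩ := h1
    exact ⟨X, ⟨hX, ⟨a, haX, ha⟩⟩, haX⟩
  · obtain ⟨N, hNop, hpN, hNfin⟩ := h𝒟lf p
    have hgex : ∀ X : Set Y, ∃ a : Y, X ∈ 𝒟 → (X ∩ A).Nonempty → a ∈ A ∧ X ⊆ V a := by
      intro X
      by_cases hX : X ∈ 𝒟 ∧ (X ∩ A).Nonempty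
      · obtain ⟨C, hC, hXC⟩ := h𝒟ref X hX.1
        rcases mem_insert_iff.mp hC with rfl | ⟨a, ha, rfl⟩
        · obtain ⟨z, hz1, hz2⟩ := hX.2
          exact absurd hz2 (hXC hz1)
        · exact ⟨a, fun _ _ => ⟨ha, hXC⟩⟩
      · exact ⟨p, fun h1 h2 => absurd ⟨h1, h2⟩ hX⟩
    choose g hg using hgex
    set T : Set (Set Y) := {X ∈ 𝒟 | (X ∩ N).Nonempty ∧ (X ∩ A).Nonempty} with hT
    have hTfin : T.Finite := hNfin.subset (fun X hX => ⟨hX.1, hX.2.1⟩)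
    have hOop : SLOpen γ (N ∩ ⋂ X ∈ T, U (g X)) :=
      hA _ _ hNop (slOpen_biInter hγ hA hTfin
        (fun X hX => (hUV (g X) ((hg X hX.1 hX.2.2).1)).1))
    have hpO : p ∈ N ∩ ⋂ X ∈ T, U (g X) :=
      ⟨hpN, mem_iInter₂.mpr fun X hX => (hUV (g X) ((hg X hX.1 hX.2.2).1)).2.2.1⟩
    have hdisj : ∀ x, x ∈ N ∩ ⋂ X ∈ T, U (g X) →
        x ∉ ⋃₀ {X ∈ 𝒟 | (X ∩ A).Nonempty} := by
      rintro x ⟨hxN, hxI⟩ ⟨X, ⟨hX𝒟, hXA⟩, hxX⟩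
      have hXT : X ∈ T := ⟨hX𝒟, ⟨x, hxX, hxN⟩, hXA⟩
      have hxU : x ∈ U (g X) := mem_iInter₂.mp hxI X hXT
      have hxV : x ∈ V (g X) := (hg X hX𝒟 hXA).2 hxX
      have h5 := (hUV (g X) ((hg X hX𝒟 hXA).1)).2.2.2.2
      have : x ∈ U (g X) ∩ V (g X) := ⟨hxU, hxV⟩
      rw [h5] at this
      exact this
    intro hpcl
    have hsub : slCl γ (⋃₀ {X ∈ 𝒟 | (X ∩ A).Nonempty}) ⊆ (N ∩ ⋂ X ∈ T, U (g X))ᶜ :=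
      slCl_subset hOop (fun x hx hxO => hdisj x hxO hx)
    exact (hsub hpcl) hpO

lemma aux_H (γ : Set (Set Y)) (hγ : IsGT γ)
    (hA : ∀ U V : Set Y, SLOpen γ U → SLOpen γ V → SLOpen γ (U ∩ V))
    (hT2 : SLT2 γ)
    (hpara : ∀ 𝒞 : Set (Set Y), (∀ U ∈ 𝒞, SLOpen γ U) → ⋃₀ 𝒞 = univ →
      ∃ 𝒟 : Set (Set Y), (∀ V ∈ 𝒟, SLOpen γ V) ∧
        (∀ V ∈ 𝒟, ∃ U ∈ 𝒞, V ⊆ U) ∧ ⋃₀ 𝒟 = univ ∧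
        (∀ y : Y, ∃ N : Set Y, SLOpen γ N ∧ y ∈ N ∧
          {V ∈ 𝒟 | (V ∩ N).Nonempty}.Finite))
    (A B : Set Y) (hAcl : SLClosed γ A) (hBcl : SLClosed γ B) (hAB : A ∩ B = ∅) :
    ∃ F : Set Y, SLOpen γ F ∧ B ⊆ F ∧ ∀ a ∈ A, a ∉ slCl γ F := by
  have hsep : ∀ b : Y, ∃ W : Set Y, b ∈ B →
      SLOpen γ W ∧ b ∈ W ∧ ∀ a ∈ A, a ∉ slCl γ W := by
    intro b
    by_cases hb : b ∈ B
    · have hbA : b ∉ A := fun h => by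
        have : b ∈ A ∩ B := ⟨h, hb⟩
        rw [hAB] at this; exact this
      obtain ⟨E, hEop, hAE, hbE⟩ := aux_R γ hγ hA hT2 hpara A hAcl b hbA
      refine ⟨(slCl γ E)ᶜ, fun _ => ⟨slOpen_compl (slClosed_slCl hγ), hbE, ?_⟩⟩
      intro a ha hacl
      have h1 : slCl γ (slCl γ E)ᶜ ⊆ Eᶜ :=
        slCl_subset hEop (compl_subset_compl.mpr subset_slCl)
      exact (h1 hacl) (hAE ha)
    · exact ⟨∅, fun h => absurd h hb⟩
  choose W hW using hsep
  set 𝒞 : Set (Set Y) := insert Bᶜ {X | ∃ b ∈ B, X = W b} with h𝒞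
  have hcov : ⋃₀ 𝒞 = univ := by
    ext y; simp only [mem_univ, iff_true, mem_sUnion]
    by_cases hy : y ∈ B
    · exact ⟨W y, mem_insert_of_mem _ ⟨y, hy, rfl⟩, (hW y hy).2.1⟩
    · exact ⟨Bᶜ, mem_insert _ _, hy⟩
  have hop : ∀ X ∈ 𝒞, SLOpen γ X := by
    intro X hX
    rcases mem_insert_iff.mp hX with rfl | ⟨b, hb, rfl⟩
    · exact slOpen_compl hBcl
    · exact (hW b hb).1
  obtain ⟨𝒟, h𝒟op, h𝒟ref, h𝒟cov, h𝒟lf⟩ := hpara 𝒞 hop hcov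
  refine ⟨⋃₀ {X ∈ 𝒟 | (X ∩ B).Nonempty},
      slOpen_sUnion hγ (fun X hX => h𝒟op X hX.1), ?_, ?_⟩
  · intro b hb
    have h1 : b ∈ ⋃₀ 𝒟 := h𝒟cov ▸ mem_univ b
    obtain ⟨X, hX, hbX⟩ := h1
    exact ⟨X, ⟨hX, ⟨b, hbX, hb⟩⟩, hbX⟩
  · intro a ha
    obtain ⟨N, hNop, haN, hNfin⟩ := h𝒟lf a
    have hgex : ∀ X : Set Y, ∃ b : Y, X ∈ 𝒟 → (X ∩ B).Nonempty → b ∈ B ∧ X ⊆ W b := by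
      intro X
      by_cases hX : X ∈ 𝒟 ∧ (X ∩ B).Nonempty
      · obtain ⟨C, hC, hXC⟩ := h𝒟ref X hX.1
        rcases mem_insert_iff.mp hC with rfl | ⟨b, hb, rfl⟩
        · obtain ⟨z, hz1, hz2⟩ := hX.2
          exact absurd hz2 (hXC hz1)
        · exact ⟨b, fun _ _ => ⟨hb, hXC⟩⟩
      · exact ⟨a, fun h1 h2 => absurd ⟨h1, h2⟩ hX⟩
    choose g hg using hgex
    set T : Set (Set Y) := {X ∈ 𝒟 | (X ∩ N).Nonempty ∧ (X ∩ B).Nonempty} with hT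
    have hTfin : T.Finite := hNfin.subset (fun X hX => ⟨hX.1, hX.2.1⟩)
    have hOop : SLOpen γ (N ∩ ⋂ X ∈ T, (slCl γ (W (g X)))ᶜ) :=
      hA _ _ hNop (slOpen_biInter hγ hA hTfin
        (fun X _ => slOpen_compl (slClosed_slCl hγ)))
    have haO : a ∈ N ∩ ⋂ X ∈ T, (slCl γ (W (g X)))ᶜ := by
      refine ⟨haN, mem_iInter₂.mpr fun X hX => ?_⟩
      exact (hW (g X) ((hg X hX.1 hX.2.2).1)).2.2 a ha
    have hdisj : ∀ x, x ∈ N ∩ ⋂ X ∈ T, (slCl γ (W (g X)))ᶜ →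
        x ∉ ⋃₀ {X ∈ 𝒟 | (X ∩ B).Nonempty} := by
      rintro x ⟨hxN, hxI⟩ ⟨X, ⟨hX𝒟, hXB⟩, hxX⟩
      have hXT : X ∈ T := ⟨hX𝒟, ⟨x, hxX, hxN⟩, hXB⟩
      have hxc : x ∈ (slCl γ (W (g X)))ᶜ := mem_iInter₂.mp hxI X hXT
      exact hxc (subset_slCl ((hg X hX𝒟 hXB).2 hxX))
    intro hacl
    have hsub : slCl γ (⋃₀ {X ∈ 𝒟 | (X ∩ B).Nonempty}) ⊆
        (N ∩ ⋂ X ∈ T, (slCl γ (W (g X)))ᶜ)ᶜ :=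
      slCl_subset hOop (fun x hx hxO => hdisj x hxO hx)
    exact (hsub hacl) haO

theorem stmt17 (γ : Set (Set Y)) (hγ : IsGT γ)
    (hA : ∀ U V : Set Y, SLOpen γ U → SLOpen γ V → SLOpen γ (U ∩ V))
    (hT2 : SLT2 γ)
    (hpara : ∀ 𝒞 : Set (Set Y), (∀ U ∈ 𝒞, SLOpen γ U) → ⋃₀ 𝒞 = univ →
      ∃ 𝒟 : Set (Set Y), (∀ V ∈ 𝒟, SLOpen γ V) ∧
        (∀ V ∈ 𝒟, ∃ U ∈ 𝒞, V ⊆ U) ∧ ⋃₀ 𝒟 = univ ∧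
        (∀ y : Y, ∃ N : Set Y, SLOpen γ N ∧ y ∈ N ∧
          {V ∈ 𝒟 | (V ∩ N).Nonempty}.Finite)) :
    SLNormal γ := by
  intro A B hAcl hBcl hAB
  obtain ⟨F, hFop, hBF, hAF⟩ := aux_H γ hγ hA hT2 hpara A B hAcl hBcl hAB
  have hdisj : slCl γ F ∩ A = ∅ := by
    ext x
    simp only [mem_inter_iff, mem_empty_iff_false, iff_false, not_and]
    exact fun hx hxA => hAF x hxA hx
  obtain ⟨E, hEop, hAE, hFE⟩ :=
    aux_H γ hγ hA hT2 hpara (slCl γ F) A (slClosed_slCl hγ) hAcl hdisj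
  refine ⟨E, F, hEop, hFop, hAE, hBF, ?_⟩
  ext x
  simp only [mem_inter_iff, mem_empty_iff_false, iff_false, not_and]
  exact fun hxE hxF => hFE x hxF hxE
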